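/- arXiv:0708.0397 — 5 statements merged into one kernel-verified Lean document; each statement's English description precedes it below -/
import Mathlib

section
/- Let G be a group with elements a2, a4, b, u3 such that b commutes with a2, (u3*b)² = 1, u3*a2*u3⁻¹ = a2*a4⁻¹*a2⁻¹, and a2*a4*a2 = a4*a2*a4. Then b*a4*b⁻¹ = u3⁻¹*a4⁻¹*u3. -/
/-!
Since `(u₃b)² = 1`, conjugation by `bu₃ = u₃⁻¹b⁻¹` agrees with conjugation by `u₃⁻¹` on the
centralizer of `b`. Writing `a₄ = a₂⁻¹ (u₃a₂⁻¹u₃⁻¹) a₂` and using that `b` commutes with `a₂`, this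
turns `b a₄ b⁻¹` into `u₃⁻¹ (u₃a₂⁻¹u₃⁻¹ · a₂⁻¹ · u₃a₂u₃⁻¹) u₃`, and the braid relation in the form
`a₂a₄a₂⁻¹ = a₄⁻¹a₂a₄` collapses the middle factor to `a₄⁻¹`.
-/

section

variable {G : Type*} [Group G]

theorem conj_mul_eq_conj_inv_of_mul_sq_eq_one {u b x : G} (h : (u * b) ^ 2 = 1)
    (hx : Commute b x) : b * u * x * (b * u)⁻¹ = u⁻¹ * x * u := by
  rw [sq] at h
  calc b * u * x * (b * u)⁻¹
        = u⁻¹ * (u * b * (u * b)) * (b⁻¹ * x * b) * (u * b * (u * b))⁻¹ * u := by group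
    _ = u⁻¹ * x * u := by rw [h, hx.inv_mul_cancel]; group

theorem mul_mul_inv_eq_inv_mul_mul_of_braid {a c : G} (h : a * c * a = c * a * c) :
    a * c * a⁻¹ = c⁻¹ * a * c := by
  calc a * c * a⁻¹ = c⁻¹ * (c * a * c) * (a * c * a)⁻¹ * a * c := by group
    _ = c⁻¹ * a * c := by rw [h]; group

end

theorem stmt12 {G : Type*} [Group G] (a2 a4 b u3 : G)
    (hb2 : b * a2 = a2 * b) (h11 : (u3 * b) ^ 2 = 1)
    (h9 : u3 * a2 * u3⁻¹ = a2 * a4⁻¹ * a2⁻¹)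
    (h24 : a2 * a4 * a2 = a4 * a2 * a4) :
    b * a4 * b⁻¹ = u3⁻¹ * a4⁻¹ * u3 := by
  have hb : Commute b a2 := hb2
  have hu3 : u3 * a2⁻¹ * u3⁻¹ = a2 * a4 * a2⁻¹ := by
    simpa [mul_assoc] using congrArg (·⁻¹) h9
  have hba4 : b * a4 * b⁻¹ = a2⁻¹ * (u3⁻¹ * a2⁻¹ * u3) * a2 :=
    calc b * a4 * b⁻¹ = b * (a2⁻¹ * (a2 * a4 * a2⁻¹) * a2) * b⁻¹ := by group
      _ = (b * a2⁻¹ * b⁻¹) * (b * u3 * a2⁻¹ * (b * u3)⁻¹) * (b * a2 * b⁻¹) := by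
        rw [← hu3]; group
      _ = a2⁻¹ * (u3⁻¹ * a2⁻¹ * u3) * a2 := by
        rw [hb.mul_inv_cancel, hb.inv_right.mul_inv_cancel,
          conj_mul_eq_conj_inv_of_mul_sq_eq_one h11 hb.inv_right]
  calc b * a4 * b⁻¹ = u3⁻¹ * ((u3 * a2⁻¹ * u3⁻¹) * a2⁻¹ * (u3 * a2 * u3⁻¹)) * u3 := by
        rw [hba4]; group
    _ = u3⁻¹ * a4⁻¹ * u3 := by
      rw [hu3, h9, mul_mul_inv_eq_inv_mul_mul_of_braid h24]; group
end

section
/- Let G be a group with elements a1, a2, a3, a4, b, u1, u2, u3, t satisfying relations (1)–(21) below. Then the braid relation u1*u2*u1 = u2*u1*u2 holds in G. -/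
/-!
Write `c = a1 a2 a3` and `x = a2 a3`. Since `c⁴ = 1` and `u3` commutes with `a1`, relation (15)
gives `u1 = c⁻¹ (x⁻¹ u3 x) c`. Conjugation by the involution `t` fixes the `aᵢ` and inverts `u3`,
so it carries `u2 = x⁻¹ u3⁻¹ x` to `x⁻¹ u3 x`. Hence `u1 w = w u2` for `w = c⁻¹ t`, while (17)
reads `u2 u1 = u3⁻¹ w`. As `u1` commutes with `u3`,
`u1 u2 u1 = u1 u3⁻¹ w = u3⁻¹ u1 w = u3⁻¹ w u2 = u2 u1 u2`.
-/

section

variable {G : Type*} [Group G]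

theorem braid_of_mul_eq_mul_of_commute {u₁ u₂ v w : G} (hw : u₁ * w = w * u₂)
    (hv : u₂ * u₁ = v * w) (hc : Commute u₁ v) : u₁ * u₂ * u₁ = u₂ * u₁ * u₂ := by
  calc u₁ * u₂ * u₁ = u₁ * v * w := by rw [mul_assoc, hv, mul_assoc]
    _ = v * (u₁ * w) := by rw [hc.eq, mul_assoc]
    _ = u₂ * u₁ * u₂ := by rw [hw, ← mul_assoc, ← hv]

theorem pow_two_mul_mul_pow_two_of_pow_four {c : G} (hc : c ^ 4 = 1) (u : G) :
    c ^ 2 * u * c ^ 2 = c⁻¹ * (c⁻¹ * u * c) * c := by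
  have hinv : (c ^ 2)⁻¹ = c ^ 2 := inv_eq_of_mul_eq_one_right (by rw [← pow_add, hc])
  calc c ^ 2 * u * c ^ 2 = (c ^ 2)⁻¹ * u * c ^ 2 := by rw [hinv]
    _ = c⁻¹ * (c⁻¹ * u * c) * c := by simp only [sq, mul_inv_rev, mul_assoc]

theorem conj_mul_of_commute {a u : G} (h : Commute a u) (x : G) :
    (a * x)⁻¹ * u * (a * x) = x⁻¹ * u * x := by
  rw [mul_inv_rev, mul_assoc x⁻¹, h.inv_left.eq]
  group

theorem conj_conj_inv_of_commute {t u x : G} (htu : t * u * t⁻¹ = u⁻¹) (htx : Commute t x) :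
    t * (x⁻¹ * u⁻¹ * x) * t⁻¹ = x⁻¹ * u * x := by
  have hx : t * x * t⁻¹ = x := by rw [htx.eq, mul_inv_cancel_right]
  change MulAut.conj t (x⁻¹ * u⁻¹ * x) = _
  simp only [map_mul, map_inv, MulAut.conj_apply, hx, htu, inv_inv]

end

theorem stmt14_general {G : Type*} [Group G] (a1 a2 a3 u1 u2 u3 t : G)
    (h5 : (a1 * a2 * a3) ^ 4 = 1)
    (h7 : u3 * a1 * u3⁻¹ = a1)
    (h13 : u1 * u3 = u3 * u1)
    (h15 : u1 = (a1 * a2 * a3) ^ 2 * u3 * (a1 * a2 * a3) ^ 2)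
    (h16 : u2 = a3⁻¹ * a2⁻¹ * u3⁻¹ * a2 * a3)
    (h17 : t = u3 * u2 * u1 * a1 * a2 * a3)
    (h18 : t ^ 2 = 1) (h19 : t * u3 * t = u3⁻¹)
    (h21a : t * a1 = a1 * t) (h21b : t * a2 = a2 * t) (h21c : t * a3 = a3 * t) :
    u1 * u2 * u1 = u2 * u1 * u2 := by
  set c := a1 * a2 * a3
  set x := a2 * a3
  have hc : c = a1 * x := mul_assoc a1 a2 a3
  have hu3a1 : Commute u3 a1 := mul_inv_eq_iff_eq_mul.mp h7
  have hu1 : u1 = c⁻¹ * (x⁻¹ * u3 * x) * c := by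
    rw [h15, pow_two_mul_mul_pow_two_of_pow_four h5, hc, conj_mul_of_commute hu3a1.symm]
  have htx : Commute t x := Commute.mul_right h21b h21c
  have htc : Commute t c := hc ▸ Commute.mul_right h21a htx
  have ht : t⁻¹ = t := inv_eq_of_mul_eq_one_right (by rw [← pow_two, h18])
  have hu2 : t * u2 * t⁻¹ = x⁻¹ * u3 * x := by
    rw [← conj_conj_inv_of_commute (by rwa [ht]) htx, h16]
    simp only [x]
    group
  refine braid_of_mul_eq_mul_of_commute (v := u3⁻¹) (w := c⁻¹ * t) ?_ ?_
    (Commute.inv_right h13)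
  · rw [hu1, ← hu2]
    group
  · rw [← htc.inv_right.eq, h17]
    simp only [c]
    group

theorem stmt14 {G : Type*} [Group G] (a1 a2 a3 a4 b u1 u2 u3 t : G)
    (h1 : a1 * a3 = a3 * a1) (h2 : a4 * a3 = a3 * a4)
    (h3a : b * a1 = a1 * b) (h3b : b * a2 = a2 * b) (h3c : b * a3 = a3 * b)
    (h4a : a1 * a2 * a1 = a2 * a1 * a2) (h4b : a3 * a2 * a3 = a2 * a3 * a2)
    (h4c : a4 * a2 * a4 = a2 * a4 * a2)
    (h5 : (a1 * a2 * a3) ^ 4 = 1) (h6 : (a4 * a2 * a3) ^ 4 = 1)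
    (h7 : u3 * a1 * u3⁻¹ = a1) (h8 : u3 * a3 * u3⁻¹ = a3⁻¹)
    (h9 : u3 * a2 * u3⁻¹ = a2 * a4⁻¹ * a2⁻¹)
    (h10 : (u3 * a4) ^ 2 = 1) (h11 : (u3 * b) ^ 2 = 1)
    (h12 : u3 * a4 * u3⁻¹ = u1 * a4 * u1⁻¹)
    (h13 : u1 * u3 = u3 * u1) (h14 : u1 ^ 2 = u3 ^ 2)
    (h15 : u1 = (a1 * a2 * a3) ^ 2 * u3 * (a1 * a2 * a3) ^ 2)
    (h16 : u2 = a3⁻¹ * a2⁻¹ * u3⁻¹ * a2 * a3)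
    (h17 : t = u3 * u2 * u1 * a1 * a2 * a3)
    (h18 : t ^ 2 = 1) (h19 : t * u3 * t = u3⁻¹) (h20 : t * b * t = b⁻¹)
    (h21a : t * a1 = a1 * t) (h21b : t * a2 = a2 * t) (h21c : t * a3 = a3 * t) :
    u1 * u2 * u1 = u2 * u1 * u2 :=
  stmt14_general a1 a2 a3 u1 u2 u3 t h5 h7 h13 h15 h16 h17 h18 h19 h21a h21b h21c
end

section
/- Let G be a group with elements a1, a2, a3, a4, b, u1, u2, u3, t satisfying relations (1)–(21) below. Then a2⁻¹*u1*u2*u1*a2 = a3*(u1*u3⁻¹)*t. -/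
/-!
Put `c = a1 a2 a3`. The braid relations make conjugation by `c` send `a1 ↦ a2 ↦ a3`, and
`(c²)² = 1`, so `u1 = c² u3 c²` commutes with `a3`. Conjugation by the involution `t` fixes
`a1, a2, a3` and inverts `u3`, hence also `u1` and `u2`; since `p = u3 u2 u1 = t c⁻¹` commutes
with `t`, this gives `p = u3⁻¹ u2⁻¹ u1⁻¹`. Moreover `p` acts on `a1, a2, a3` as `c⁻¹` does, so
the action of `u2⁻¹ = u3 p u1` and of `u1 = u2⁻¹ u3⁻¹ p` on `a3` and on `c a3 c⁻¹` can be
computed. The result is that `u1 u3⁻¹` conjugates `c⁻¹ a2` to `a2 a3`, which is the claimed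
identity after writing `u2 u1 = u3⁻¹ t c⁻¹`.
-/

section

variable {G : Type*} [Group G]

theorem semiconjBy_of_conj_eq {g x y : G} (h : g * x * g⁻¹ = y) : SemiconjBy g x y :=
  h ▸ SemiconjBy.conj_mk g x

theorem SemiconjBy.right_unique {g x y y' : G} (h : SemiconjBy g x y) (h' : SemiconjBy g x y') :
    y = y' :=
  mul_right_cancel (h.eq.symm.trans h'.eq)

theorem SemiconjBy.inv_left_of_inv {g y : G} (h : SemiconjBy g y y⁻¹) :
    SemiconjBy g⁻¹ y y⁻¹ := by
  simpa using h.inv_symm_left.inv_right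

section Braid

variable {a b c : G}

theorem semiconjBy_braid_left (hac : a * c = c * a) (hab : a * b * a = b * a * b) :
    SemiconjBy (a * b * c) a b :=
  calc a * b * c * a = a * b * a * c := by simp only [mul_assoc, hac]
    _ = b * (a * b * c) := by rw [hab]; simp only [mul_assoc]

theorem semiconjBy_braid_mid (hac : a * c = c * a) (hbc : c * b * c = b * c * b) :
    SemiconjBy (a * b * c) b c :=
  calc a * b * c * b = a * c * b * c := by simp only [mul_assoc, hbc]
    _ = c * (a * b * c) := by rw [hac]; simp only [mul_assoc]

theorem semiconjBy_braid_right (hac : a * c = c * a) (hab : a * b * a = b * a * b)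
    (hbc : c * b * c = b * c * b) :
    SemiconjBy (a * b * c) c ((b * c)⁻¹ * a * (b * c)) := by
  have h : SemiconjBy (a * b * c) (a * b) (b * c) :=
    (semiconjBy_braid_left hac hab).mul_right (semiconjBy_braid_mid hac hbc)
  calc a * b * c * c = (b * c)⁻¹ * ((a * b * c) * (a * b)) * c := by rw [h.eq]; group
    _ = (b * c)⁻¹ * a * (b * c) * (a * b * c) := by group

theorem semiconjBy_braid_sq (hac : a * c = c * a) (hab : a * b * a = b * a * b)
    (hbc : c * b * c = b * c * b) :
    SemiconjBy ((a * b * c) ^ 2) a c :=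
  pow_two (a * b * c) ▸ (semiconjBy_braid_mid hac hbc).mul_left (semiconjBy_braid_left hac hab)

theorem inv_braid_sq (h4 : (a * b * c) ^ 4 = 1) : ((a * b * c) ^ 2)⁻¹ = (a * b * c) ^ 2 :=
  inv_eq_of_mul_eq_one_right (by rw [← pow_add]; exact h4)

theorem commute_braid_sq_conj {u : G} (hac : a * c = c * a) (hab : a * b * a = b * a * b)
    (hbc : c * b * c = b * c * b) (h4 : (a * b * c) ^ 4 = 1) (hu : Commute u a) :
    Commute ((a * b * c) ^ 2 * u * (a * b * c) ^ 2) c := by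
  have hW := semiconjBy_braid_sq hac hab hbc
  have hW' : SemiconjBy ((a * b * c) ^ 2) c a := inv_braid_sq h4 ▸ hW.inv_symm_left
  exact (hW.mul_left hu).mul_left hW'

end Braid

variable {u1 u2 u3 t : G}

theorem mul_mul_eq_inv_mul_inv_mul_inv {k l : G} (hu1 : u1 = k * u3 * k⁻¹)
    (hu2 : u2 = l * u3⁻¹ * l⁻¹) (hk : Commute t k) (hl : Commute t l)
    (hp : Commute t (u3 * u2 * u1)) (ht : SemiconjBy t u3 u3⁻¹) :
    u3 * u2 * u1 = u3⁻¹ * u2⁻¹ * u1⁻¹ := by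
  have ht1 : SemiconjBy t u1 u1⁻¹ := by
    rw [hu1, conj_inv]; exact (SemiconjBy.mul_right hk ht).mul_right hk.inv_right
  have ht2 : SemiconjBy t u2 u2⁻¹ := by
    rw [hu2, conj_inv]
    exact (SemiconjBy.mul_right hl ht.inv_right).mul_right hl.inv_right
  exact hp.right_unique ((ht.mul_right ht2).mul_right ht1)

theorem semiconjBy_mul_inv_of_mul_mul_eq {x y z : G}
    (hinv : u3 * u2 * u1 = u3⁻¹ * u2⁻¹ * u1⁻¹)
    (hx : SemiconjBy (u3 * u2 * u1) y x) (hz : SemiconjBy (u3 * u2 * u1) z y)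
    (hu1 : Commute u1 y) (hu3 : SemiconjBy u3 y y⁻¹) (hu13 : Commute u1 u3) :
    SemiconjBy (u1 * u3⁻¹) (z⁻¹ * y⁻¹) (x * y) := by
  have hu2 : SemiconjBy u2⁻¹ y (u3 * x * u3⁻¹) := by
    have : u2⁻¹ = u3 * (u3 * u2 * u1) * u1 := by rw [hinv]; group
    exact this ▸ ((SemiconjBy.conj_mk u3 x).mul_left hx).mul_left hu1
  have hu1z : SemiconjBy u1 z (u3 * x * u3⁻¹)⁻¹ := by
    have : u1 = u2⁻¹ * u3⁻¹ * (u3 * u2 * u1) := by group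
    exact this ▸ (hu2.inv_right.mul_left hu3.inv_left_of_inv).mul_left hz
  have hu3x : SemiconjBy u3⁻¹ (u3 * x * u3⁻¹) x := (SemiconjBy.conj_mk u3 x).inv_symm_left
  rw [hu13.inv_right.eq]
  exact (hu3x.mul_right hu3.inv_symm_left).mul_left
    ((inv_inv (u3 * x * u3⁻¹) ▸ hu1z.inv_right).mul_right hu1.inv_right)

end

theorem stmt15_general {G : Type*} [Group G] (a1 a2 a3 u1 u2 u3 t : G)
    (h1 : a1 * a3 = a3 * a1)
    (h4a : a1 * a2 * a1 = a2 * a1 * a2) (h4b : a3 * a2 * a3 = a2 * a3 * a2)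
    (h5 : (a1 * a2 * a3) ^ 4 = 1)
    (h7 : u3 * a1 * u3⁻¹ = a1) (h8 : u3 * a3 * u3⁻¹ = a3⁻¹)
    (h13 : u1 * u3 = u3 * u1)
    (h15 : u1 = (a1 * a2 * a3) ^ 2 * u3 * (a1 * a2 * a3) ^ 2)
    (h16 : u2 = a3⁻¹ * a2⁻¹ * u3⁻¹ * a2 * a3)
    (h17 : t = u3 * u2 * u1 * a1 * a2 * a3)
    (h18 : t ^ 2 = 1) (h19 : t * u3 * t = u3⁻¹)
    (h21a : t * a1 = a1 * t) (h21b : t * a2 = a2 * t) (h21c : t * a3 = a3 * t) :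
    a2⁻¹ * u1 * u2 * u1 * a2 = a3 * (u1 * u3⁻¹) * t := by
  have hp : u3 * u2 * u1 = t * (a1 * a2 * a3)⁻¹ := by rw [h17]; group
  have ht2 : Commute t a2 := h21b
  have ht3 : Commute t a3 := h21c
  have htc : Commute t (a1 * a2 * a3) := (Commute.mul_right h21a ht2).mul_right ht3
  have hu3 : SemiconjBy u3 a3 a3⁻¹ := semiconjBy_of_conj_eq h8
  have hstar : u3 * u2 * u1 = u3⁻¹ * u2⁻¹ * u1⁻¹ :=
    mul_mul_eq_inv_mul_inv_mul_inv (l := (a2 * a3)⁻¹) (by rw [h15, inv_braid_sq h5])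
      (by rw [h16]; group) (htc.pow_right 2) (ht2.mul_right ht3).inv_right
      (hp ▸ (Commute.refl t).mul_right htc.inv_right)
      (semiconjBy_of_conj_eq (by rwa [inv_eq_of_mul_eq_one_right (by rw [← pow_two, h18])]))
  have hpa3 : SemiconjBy (u3 * u2 * u1) a3 a2 :=
    hp ▸ SemiconjBy.mul_left ht2 (semiconjBy_braid_mid h1 h4b).inv_symm_left
  have hpz : SemiconjBy (u3 * u2 * u1) ((a2 * a3)⁻¹ * a1 * (a2 * a3)) a3 :=
    hp ▸ SemiconjBy.mul_left ht3 (semiconjBy_braid_right h1 h4a h4b).inv_symm_left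
  have hs := semiconjBy_mul_inv_of_mul_mul_eq hstar hpa3 hpz
    (h15 ▸ commute_braid_sq_conj h1 h4a h4b h5 (semiconjBy_of_conj_eq h7)) hu3 h13
  have htx : Commute t ((a1 * a2 * a3)⁻¹ * a2) := htc.inv_right.mul_right ht2
  calc a2⁻¹ * u1 * u2 * u1 * a2 = a2⁻¹ * (u1 * u3⁻¹) * ((u3 * u2 * u1) * a2) := by group
    _ = a2⁻¹ * ((u1 * u3⁻¹) * ((a1 * a2 * a3)⁻¹ * a2)) * t := by
      rw [hp, mul_assoc t, htx.eq]; group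
    _ = a2⁻¹ * ((a2 * a3) * (u1 * u3⁻¹)) * t := by
      rw [← hs.eq]; group
    _ = a3 * (u1 * u3⁻¹) * t := by group

theorem stmt15 {G : Type*} [Group G] (a1 a2 a3 a4 b u1 u2 u3 t : G)
    (h1 : a1 * a3 = a3 * a1) (h2 : a4 * a3 = a3 * a4)
    (h3a : b * a1 = a1 * b) (h3b : b * a2 = a2 * b) (h3c : b * a3 = a3 * b)
    (h4a : a1 * a2 * a1 = a2 * a1 * a2) (h4b : a3 * a2 * a3 = a2 * a3 * a2)
    (h4c : a4 * a2 * a4 = a2 * a4 * a2)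
    (h5 : (a1 * a2 * a3) ^ 4 = 1) (h6 : (a4 * a2 * a3) ^ 4 = 1)
    (h7 : u3 * a1 * u3⁻¹ = a1) (h8 : u3 * a3 * u3⁻¹ = a3⁻¹)
    (h9 : u3 * a2 * u3⁻¹ = a2 * a4⁻¹ * a2⁻¹)
    (h10 : (u3 * a4) ^ 2 = 1) (h11 : (u3 * b) ^ 2 = 1)
    (h12 : u3 * a4 * u3⁻¹ = u1 * a4 * u1⁻¹)
    (h13 : u1 * u3 = u3 * u1) (h14 : u1 ^ 2 = u3 ^ 2)
    (h15 : u1 = (a1 * a2 * a3) ^ 2 * u3 * (a1 * a2 * a3) ^ 2)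
    (h16 : u2 = a3⁻¹ * a2⁻¹ * u3⁻¹ * a2 * a3)
    (h17 : t = u3 * u2 * u1 * a1 * a2 * a3)
    (h18 : t ^ 2 = 1) (h19 : t * u3 * t = u3⁻¹) (h20 : t * b * t = b⁻¹)
    (h21a : t * a1 = a1 * t) (h21b : t * a2 = a2 * t) (h21c : t * a3 = a3 * t) :
    a2⁻¹ * u1 * u2 * u1 * a2 = a3 * (u1 * u3⁻¹) * t :=
  stmt15_general a1 a2 a3 u1 u2 u3 t h1 h4a h4b h5 h7 h8 h13 h15 h16 h17 h18 h19 h21a h21b h21c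
end

section
/- Let G be a group with elements a1, a2, a3, a4, b, u1, u2, u3, t satisfying relations (1)–(21) below. Then t*a1⁻¹*u1⁻¹ = a3⁻¹*(a3²*a2)²*a4; equivalently, (a3²*a2)² = a3*t*a1⁻¹*u1⁻¹*a4⁻¹. -/
/-!
Conjugation by `c = a1 a2 a3` shifts `a1 ↦ a2 ↦ a3`, so the involution `c²` swaps `a1` and `a3`,
and `u1 = c² u3 c²` inverts `a1` and centralises `a3`; by (10), (12), (14) also `(u1 a4)² = 1`.
Relations (8), (9), (16) give `u3 u2 = X := a3 a2 a4 a3`, so `t = X u1 c`, and `[t, a1] = 1` says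
that `X u1` conjugates `a2` to `a1`. Conjugating the braid relation between `a1` and `a2` by `u1`
and computing `u1 X u1` then express `a1⁻¹ (u1 a2 u1⁻¹) a1` through `a2, a3, a4`; substituting this
into `t a1⁻¹ u1⁻¹ = X · u1 (a1 a2 a1⁻¹ a3) u1⁻¹` gives the claim.
-/

section BraidRelations

variable {G : Type*} [Group G]

theorem SemiconjBy.of_conj_eq {u x y : G} (h : u * x * u⁻¹ = y) : SemiconjBy u x y :=
  h ▸ SemiconjBy.conj_mk u x

theorem SemiconjBy.symm_of_sq_eq_one {d x y : G} (hd : d ^ 2 = 1) (h : SemiconjBy d x y) :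
    SemiconjBy d y x := by
  simpa [inv_eq_of_mul_eq_one_right (pow_two d ▸ hd)] using h.inv_symm_left

theorem semiconjBy_mul_mul_of_swap {d u x z : G} (hd : d ^ 2 = 1) (hdxz : SemiconjBy d x z)
    (hux : SemiconjBy u x x) (huz : SemiconjBy u z z⁻¹) :
    SemiconjBy (d * u * d) x x⁻¹ ∧ SemiconjBy (d * u * d) z z := by
  have hdzx := hdxz.symm_of_sq_eq_one hd
  exact ⟨(hdzx.inv_right.mul_left huz).mul_left hdxz, (hdxz.mul_left hux).mul_left hdzx⟩

theorem semiconjBy_braid_left_s17 {a₁ a₂ a₃ : G} (h₁₃ : a₁ * a₃ = a₃ * a₁)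
    (h : a₁ * a₂ * a₁ = a₂ * a₁ * a₂) : SemiconjBy (a₁ * a₂ * a₃) a₁ a₂ :=
  calc a₁ * a₂ * a₃ * a₁ = a₁ * a₂ * a₁ * a₃ := by rw [mul_assoc _ a₃, ← h₁₃, ← mul_assoc]
    _ = a₂ * (a₁ * a₂ * a₃) := by rw [h]; group

theorem semiconjBy_braid_right_s17 {a₁ a₂ a₃ : G} (h₁₃ : a₁ * a₃ = a₃ * a₁)
    (h : a₃ * a₂ * a₃ = a₂ * a₃ * a₂) : SemiconjBy (a₁ * a₂ * a₃) a₂ a₃ :=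
  calc a₁ * a₂ * a₃ * a₂ = a₁ * (a₂ * a₃ * a₂) := by group
    _ = a₁ * a₃ * (a₂ * a₃) := by rw [← h]; group
    _ = a₃ * (a₁ * a₂ * a₃) := by rw [h₁₃]; group

theorem inv_mul_mul_eq_of_braid {x y : G} (h : x * y * x = y * x * y) :
    y⁻¹ * x * y = x * y * x⁻¹ :=
  calc y⁻¹ * x * y = y⁻¹ * (x * y * x) * x⁻¹ := by group
    _ = x * y * x⁻¹ := by rw [h]; group

theorem sq_mul_eq_one_of_conj_eq {u v a : G} (hu : (u * a) ^ 2 = 1)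
    (hconj : u * a * u⁻¹ = v * a * v⁻¹) (hsq : v ^ 2 = u ^ 2) : (v * a) ^ 2 = 1 := by
  have hua : u * a * u⁻¹ = a⁻¹ * (u ^ 2)⁻¹ :=
    calc u * a * u⁻¹ = (u * a) ^ 2 * (a⁻¹ * (u ^ 2)⁻¹) := by simp only [pow_two]; group
      _ = a⁻¹ * (u ^ 2)⁻¹ := by rw [hu, one_mul]
  calc (v * a) ^ 2 = v * a * v⁻¹ * v ^ 2 * a := by simp only [pow_two]; group
    _ = 1 := by rw [← hconj, hua, hsq]; group

theorem conj_inv_eq_of_semiconjBy {a₁ a₂ a₃ a₄ g : G} (h₁₃ : a₁ * a₃ = a₃ * a₁)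
    (h : SemiconjBy (a₃ * g * a₄⁻¹ * a₃) a₂ a₁⁻¹) :
    g⁻¹ * a₁⁻¹ * g = a₄⁻¹ * a₃ * a₂ * a₃⁻¹ * a₄ := by
  have h₁₃' : a₃⁻¹ * a₁⁻¹ * a₃ = a₁⁻¹ := by
    rw [mul_assoc, (Commute.inv_left h₁₃).eq, inv_mul_cancel_left]
  rw [eq_inv_mul_of_mul_eq h.eq]
  calc g⁻¹ * a₁⁻¹ * g = g⁻¹ * (a₃⁻¹ * a₁⁻¹ * a₃) * g := by rw [h₁₃']
    _ = _ := by group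

theorem conj_mul_mul_conj_eq {u a₂ a₃ a₄ : G} (h₃ : SemiconjBy u a₃ a₃) (h₄ : (u * a₄) ^ 2 = 1) :
    u * (a₃ * a₂ * a₄ * a₃) * u = a₃ * (u * a₂ * u⁻¹) * a₄⁻¹ * a₃ := by
  have h₄' : u * a₄ * u = a₄⁻¹ := eq_inv_of_mul_eq_one_left (by rw [← h₄, pow_two]; group)
  calc u * (a₃ * a₂ * a₄ * a₃) * u = u * a₃ * a₂ * a₄ * (a₃ * u) := by group
    _ = u * a₃ * a₂ * u⁻¹ * (u * a₄ * u) * a₃ := by rw [← h₃.eq]; group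
    _ = a₃ * (u * a₂ * u⁻¹) * a₄⁻¹ * a₃ := by rw [h₃.eq, h₄']; group

theorem inv_mul_conj_mul_eq {a₁ a₂ a₃ a₄ u : G} (h₁₃ : a₁ * a₃ = a₃ * a₁)
    (hbraid : a₁ * a₂ * a₁ = a₂ * a₁ * a₂) (hu₁ : SemiconjBy u a₁ a₁⁻¹)
    (hu₃ : SemiconjBy u a₃ a₃) (hu₄ : (u * a₄) ^ 2 = 1)
    (hX : SemiconjBy (a₃ * a₂ * a₄ * a₃ * u) a₂ a₁) :
    a₁⁻¹ * (u * a₂ * u⁻¹) * a₁ = a₄⁻¹ * a₃ * a₂ * a₃⁻¹ * a₄ := by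
  set g := u * a₂ * u⁻¹
  have hu₂ : SemiconjBy u a₂ g := .conj_mk u a₂
  have hbraid' : a₁⁻¹ * g * a₁⁻¹ = g * a₁⁻¹ * g := by
    refine mul_right_cancel (b := u) ?_
    rw [← ((hu₁.mul_right hu₂).mul_right hu₁).eq, ← ((hu₂.mul_right hu₁).mul_right hu₂).eq, hbraid]
  have hY : SemiconjBy (a₃ * g * a₄⁻¹ * a₃) a₂ a₁⁻¹ := by
    rw [← conj_mul_mul_conj_eq hu₃ hu₄, mul_assoc]
    exact hu₁.mul_left hX
  simpa using (inv_mul_mul_eq_of_braid hbraid').symm.trans (conj_inv_eq_of_semiconjBy h₁₃ hY)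

theorem mul_conj_mul_inv_eq {a₁ a₂ a₃ a₄ u : G} (h₁₃ : a₁ * a₃ = a₃ * a₁)
    (h₄₃ : a₄ * a₃ = a₃ * a₄) (hu₁ : SemiconjBy u a₁ a₁⁻¹) (hu₃ : SemiconjBy u a₃ a₃)
    (h : a₁⁻¹ * (u * a₂ * u⁻¹) * a₁ = a₄⁻¹ * a₃ * a₂ * a₃⁻¹ * a₄) :
    a₃ * a₂ * a₄ * a₃ * (u * (a₁ * a₂ * a₃ * a₁⁻¹) * u⁻¹) = a₃⁻¹ * (a₃ ^ 2 * a₂) ^ 2 * a₄ :=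
  calc _ = a₃ * a₂ * a₄ * a₃ * ((u * a₁ * u⁻¹) * (u * a₂ * u⁻¹) * (u * a₁ * u⁻¹)⁻¹ *
          (u * a₃ * u⁻¹)) := by rw [mul_assoc (a₁ * a₂) a₃, (Commute.inv_right h₁₃.symm).eq]; group
    _ = a₃ * a₂ * (a₄ * a₃) * (a₄⁻¹ * a₃ * a₂ * a₃⁻¹ * (a₄ * a₃)) := by
        rw [mul_inv_eq_of_eq_mul hu₁.eq, mul_inv_eq_of_eq_mul hu₃.eq, inv_inv, h]; group
    _ = a₃⁻¹ * (a₃ ^ 2 * a₂) ^ 2 * a₄ := by rw [h₄₃]; simp only [pow_two]; group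

end BraidRelations

theorem stmt17_general {G : Type*} [Group G] (a1 a2 a3 a4 u1 u2 u3 t : G)
    (h1 : a1 * a3 = a3 * a1) (h2 : a4 * a3 = a3 * a4)
    (h4a : a1 * a2 * a1 = a2 * a1 * a2) (h4b : a3 * a2 * a3 = a2 * a3 * a2)
    (h5 : (a1 * a2 * a3) ^ 4 = 1)
    (h7 : u3 * a1 * u3⁻¹ = a1) (h8 : u3 * a3 * u3⁻¹ = a3⁻¹)
    (h9 : u3 * a2 * u3⁻¹ = a2 * a4⁻¹ * a2⁻¹)
    (h10 : (u3 * a4) ^ 2 = 1)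
    (h12 : u3 * a4 * u3⁻¹ = u1 * a4 * u1⁻¹)
    (h14 : u1 ^ 2 = u3 ^ 2)
    (h15 : u1 = (a1 * a2 * a3) ^ 2 * u3 * (a1 * a2 * a3) ^ 2)
    (h16 : u2 = a3⁻¹ * a2⁻¹ * u3⁻¹ * a2 * a3)
    (h17 : t = u3 * u2 * u1 * a1 * a2 * a3)
    (h21a : t * a1 = a1 * t) :
    t * a1⁻¹ * u1⁻¹ = a3⁻¹ * (a3 ^ 2 * a2) ^ 2 * a4 ∧ (a3 ^ 2 * a2) ^ 2 = a3 * t * a1⁻¹ * u1⁻¹ * a4⁻¹ := by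
  have hc₁ : SemiconjBy (a1 * a2 * a3) a1 a2 := semiconjBy_braid_left_s17 h1 h4a
  have hd₁₃ : SemiconjBy ((a1 * a2 * a3) ^ 2) a1 a3 :=
    pow_two (a1 * a2 * a3) ▸ (semiconjBy_braid_right_s17 h1 h4b).mul_left hc₁
  obtain ⟨hu₁a₁, hu₁a₃⟩ : SemiconjBy u1 a1 a1⁻¹ ∧ SemiconjBy u1 a3 a3 :=
    h15 ▸ semiconjBy_mul_mul_of_swap (by rw [← pow_mul, h5]) hd₁₃ (.of_conj_eq h7) (.of_conj_eq h8)
  have hu₃u₂ : u3 * u2 = a3 * a2 * a4 * a3 :=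
    calc u3 * u2 = (u3 * a2 * u3⁻¹ * (u3 * a3 * u3⁻¹))⁻¹ * a2 * a3 := by rw [h16]; group
      _ = a3 * a2 * a4 * a3 := by rw [h8, h9]; group
  have ht : t = a3 * a2 * a4 * a3 * u1 * (a1 * a2 * a3) := by rw [h17, ← hu₃u₂]; group
  have hX : SemiconjBy (a3 * a2 * a4 * a3 * u1) a2 a1 := by
    rw [ht] at h21a
    simpa only [mul_inv_cancel_right] using SemiconjBy.mul_left h21a hc₁.inv_symm_left
  have hG : t * a1⁻¹ * u1⁻¹ = a3⁻¹ * (a3 ^ 2 * a2) ^ 2 * a4 := by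
    rw [← mul_conj_mul_inv_eq h1 h2 hu₁a₁ hu₁a₃ (inv_mul_conj_mul_eq h1 h4a hu₁a₁ hu₁a₃
      (sq_mul_eq_one_of_conj_eq h10 h12 h14) hX), ht]
    group
  refine ⟨hG, ?_⟩
  rw [mul_assoc a3 t, mul_assoc a3 (t * a1⁻¹), hG]
  group

theorem stmt17 {G : Type*} [Group G] (a1 a2 a3 a4 b u1 u2 u3 t : G)
    (h1 : a1 * a3 = a3 * a1) (h2 : a4 * a3 = a3 * a4)
    (h3a : b * a1 = a1 * b) (h3b : b * a2 = a2 * b) (h3c : b * a3 = a3 * b)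
    (h4a : a1 * a2 * a1 = a2 * a1 * a2) (h4b : a3 * a2 * a3 = a2 * a3 * a2)
    (h4c : a4 * a2 * a4 = a2 * a4 * a2)
    (h5 : (a1 * a2 * a3) ^ 4 = 1) (h6 : (a4 * a2 * a3) ^ 4 = 1)
    (h7 : u3 * a1 * u3⁻¹ = a1) (h8 : u3 * a3 * u3⁻¹ = a3⁻¹)
    (h9 : u3 * a2 * u3⁻¹ = a2 * a4⁻¹ * a2⁻¹)
    (h10 : (u3 * a4) ^ 2 = 1) (h11 : (u3 * b) ^ 2 = 1)
    (h12 : u3 * a4 * u3⁻¹ = u1 * a4 * u1⁻¹)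
    (h13 : u1 * u3 = u3 * u1) (h14 : u1 ^ 2 = u3 ^ 2)
    (h15 : u1 = (a1 * a2 * a3) ^ 2 * u3 * (a1 * a2 * a3) ^ 2)
    (h16 : u2 = a3⁻¹ * a2⁻¹ * u3⁻¹ * a2 * a3)
    (h17 : t = u3 * u2 * u1 * a1 * a2 * a3)
    (h18 : t ^ 2 = 1) (h19 : t * u3 * t = u3⁻¹) (h20 : t * b * t = b⁻¹)
    (h21a : t * a1 = a1 * t) (h21b : t * a2 = a2 * t) (h21c : t * a3 = a3 * t) :
    t * a1⁻¹ * u1⁻¹ = a3⁻¹ * (a3 ^ 2 * a2) ^ 2 * a4 ∧ (a3 ^ 2 * a2) ^ 2 = a3 * t * a1⁻¹ * u1⁻¹ * a4⁻¹ :=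
  stmt17_general a1 a2 a3 a4 u1 u2 u3 t h1 h2 h4a h4b h5 h7 h8 h9 h10 h12 h14 h15 h16 h17 h21a
end

section
/- Let G be a group with elements a1, a2, a3, a4, b, u1, u2, u3, t satisfying relations (1)–(21) below. Then t*a4*t = u1⁻¹*a4⁻¹*u1. -/
/-!
Write `u = u3`, `b = a2`, `a = a4`. Relation (9) expresses `a` as the word `b⁻¹ u b⁻¹ u⁻¹ b`,
and conjugation by the involution `t` fixes `b` and inverts `u`, so `t a t = b⁻¹ u⁻¹ b⁻¹ u b`.
Conjugating (9) back by `u⁻¹`, with the braid relation (4) and `u a u = a⁻¹` from (10), turns this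
into `a u²`. Finally `u² = u1²` and `u1 a u1 = a⁻¹` by (12) and (14), so `a u1² = u1⁻¹ a⁻¹ u1`.
-/

section

variable {G : Type*} [Group G]

theorem mul_mul_self_eq_inv_of_sq_eq_one {u a : G} (h : (u * a) ^ 2 = 1) : u * a * u = a⁻¹ :=
  eq_inv_of_mul_eq_one_left <| by rw [← h, sq]; group

theorem mul_mul_self_eq_of_conj_eq_of_sq_eq {u v a : G} (hconj : u * a * u⁻¹ = v * a * v⁻¹)
    (hsq : u ^ 2 = v ^ 2) : v * a * v = u * a * u :=
  calc v * a * v = v * a * v⁻¹ * v ^ 2 := by group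
    _ = u * a * u⁻¹ * u ^ 2 := by rw [hconj, hsq]
    _ = u * a * u := by group

theorem eq_of_conj_eq_conj_inv {u a b : G} (h : u * b * u⁻¹ = b * a⁻¹ * b⁻¹) :
    a = b⁻¹ * u * b⁻¹ * u⁻¹ * b :=
  calc a = b⁻¹ * (b * a⁻¹ * b⁻¹)⁻¹ * b := by group
    _ = b⁻¹ * (u * b * u⁻¹)⁻¹ * b := by rw [h]
    _ = b⁻¹ * u * b⁻¹ * u⁻¹ * b := by group

theorem conj_inv_eq_mul_sq_of_braid {u a b : G} (hbraid : a * b * a = b * a * b)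
    (hub : u * b * u⁻¹ = b * a⁻¹ * b⁻¹) (hua : u * a * u = a⁻¹) :
    b⁻¹ * u⁻¹ * b⁻¹ * u * b = a * u ^ 2 := by
  have hua' : u * a⁻¹ * u⁻¹ = u ^ 2 * a := by rw [← hua, sq]; group
  have hconj : u * (b * u⁻¹ ^ 2 * a⁻¹ * b⁻¹) * u⁻¹ = b :=
    calc u * (b * u⁻¹ ^ 2 * a⁻¹ * b⁻¹) * u⁻¹
        = (u * b * u⁻¹) * u⁻¹ ^ 2 * (u * a⁻¹ * u⁻¹) * (u * b * u⁻¹)⁻¹ := by group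
      _ = (b * a⁻¹ * b⁻¹) * u⁻¹ ^ 2 * (u ^ 2 * a) * (b * a⁻¹ * b⁻¹)⁻¹ := by rw [hub, hua']
      _ = b * a⁻¹ * b⁻¹ * (a * b * a) * b⁻¹ := by group
      _ = b := by rw [hbraid]; group
  calc b⁻¹ * u⁻¹ * b⁻¹ * u * b = b⁻¹ * (u⁻¹ * b * u)⁻¹ * b := by group
    _ = b⁻¹ * (u⁻¹ * (u * (b * u⁻¹ ^ 2 * a⁻¹ * b⁻¹) * u⁻¹) * u)⁻¹ * b := by rw [hconj]
    _ = a * u ^ 2 := by group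

theorem involution_conj_word_eq {t u b : G} (ht : t ^ 2 = 1) (htb : t * b = b * t)
    (htu : t * u * t = u⁻¹) :
    t * (b⁻¹ * u * b⁻¹ * u⁻¹ * b) * t = b⁻¹ * u⁻¹ * b⁻¹ * u * b := by
  have hti : t⁻¹ = t := inv_eq_of_mul_eq_one_right (by rw [← sq, ht])
  have hb : MulAut.conj t b = b := by rw [MulAut.conj_apply, htb, mul_inv_cancel_right]
  have hu : MulAut.conj t u = u⁻¹ := by rw [MulAut.conj_apply, hti, htu]
  calc t * (b⁻¹ * u * b⁻¹ * u⁻¹ * b) * t = MulAut.conj t (b⁻¹ * u * b⁻¹ * u⁻¹ * b) := by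
        rw [MulAut.conj_apply, hti]
    _ = b⁻¹ * u⁻¹ * b⁻¹ * u * b := by simp only [map_mul, map_inv, hb, hu, inv_inv]

end

theorem stmt19_general {G : Type*} [Group G] (a2 a4 u1 u3 t : G)
    (h4c : a4 * a2 * a4 = a2 * a4 * a2)
    (h9 : u3 * a2 * u3⁻¹ = a2 * a4⁻¹ * a2⁻¹)
    (h10 : (u3 * a4) ^ 2 = 1)
    (h12 : u3 * a4 * u3⁻¹ = u1 * a4 * u1⁻¹)
    (h14 : u1 ^ 2 = u3 ^ 2)
    (h18 : t ^ 2 = 1) (h19 : t * u3 * t = u3⁻¹)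
    (h21b : t * a2 = a2 * t) :
    t * a4 * t = u1⁻¹ * a4⁻¹ * u1 := by
  have hu3 : u3 * a4 * u3 = a4⁻¹ := mul_mul_self_eq_inv_of_sq_eq_one h10
  have hu1 : u1 * a4 * u1 = a4⁻¹ := (mul_mul_self_eq_of_conj_eq_of_sq_eq h12 h14.symm).trans hu3
  calc t * a4 * t = t * (a2⁻¹ * u3 * a2⁻¹ * u3⁻¹ * a2) * t := by
        rw [← eq_of_conj_eq_conj_inv h9]
    _ = a2⁻¹ * u3⁻¹ * a2⁻¹ * u3 * a2 := involution_conj_word_eq h18 h21b h19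
    _ = a4 * u1 ^ 2 := by rw [conj_inv_eq_mul_sq_of_braid h4c h9 hu3, h14]
    _ = u1⁻¹ * a4⁻¹ * u1 := by rw [← hu1, sq]; group

theorem stmt19 {G : Type*} [Group G] (a1 a2 a3 a4 b u1 u2 u3 t : G)
    (h1 : a1 * a3 = a3 * a1) (h2 : a4 * a3 = a3 * a4)
    (h3a : b * a1 = a1 * b) (h3b : b * a2 = a2 * b) (h3c : b * a3 = a3 * b)
    (h4a : a1 * a2 * a1 = a2 * a1 * a2) (h4b : a3 * a2 * a3 = a2 * a3 * a2)
    (h4c : a4 * a2 * a4 = a2 * a4 * a2)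
    (h5 : (a1 * a2 * a3) ^ 4 = 1) (h6 : (a4 * a2 * a3) ^ 4 = 1)
    (h7 : u3 * a1 * u3⁻¹ = a1) (h8 : u3 * a3 * u3⁻¹ = a3⁻¹)
    (h9 : u3 * a2 * u3⁻¹ = a2 * a4⁻¹ * a2⁻¹)
    (h10 : (u3 * a4) ^ 2 = 1) (h11 : (u3 * b) ^ 2 = 1)
    (h12 : u3 * a4 * u3⁻¹ = u1 * a4 * u1⁻¹)
    (h13 : u1 * u3 = u3 * u1) (h14 : u1 ^ 2 = u3 ^ 2)
    (h15 : u1 = (a1 * a2 * a3) ^ 2 * u3 * (a1 * a2 * a3) ^ 2)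
    (h16 : u2 = a3⁻¹ * a2⁻¹ * u3⁻¹ * a2 * a3)
    (h17 : t = u3 * u2 * u1 * a1 * a2 * a3)
    (h18 : t ^ 2 = 1) (h19 : t * u3 * t = u3⁻¹) (h20 : t * b * t = b⁻¹)
    (h21a : t * a1 = a1 * t) (h21b : t * a2 = a2 * t) (h21c : t * a3 = a3 * t) :
    t * a4 * t = u1⁻¹ * a4⁻¹ * u1 :=
  stmt19_general a2 a4 u1 u3 t h4c h9 h10 h12 h14 h18 h19 h21b
end
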